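/- Let k be an algebraically closed field and f a polynomial automorphism of A²_k of degree ≥ 2. If deg(f²) = deg(f)², then deg(f^m) = deg(f)^m for every m ≥ 1. -/

import Mathlib

open MvPolynomial

/-- Composition of polynomial endomorphisms of affine `n`-space. -/
noncomputable def mvComp {k : Type*} [CommSemiring k] {n : ℕ}
    (g f : Fin n → MvPolynomial (Fin n) k) : Fin n → MvPolynomial (Fin n) k :=
  fun i => MvPolynomial.bind₁ f (g i)

/-- The degree of a polynomial endomorphism of affine `n`-space. -/
noncomputable def mvDeg {k : Type*} [CommSemiring k] {n : ℕ}
    (f : Fin n → MvPolynomial (Fin n) k) : ℕ :=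
  Finset.univ.sup fun i => (f i).totalDegree

/-!
Let `d = deg f ≥ 1` and let `φ` be the degree-`d` homogeneous part of `f`. The degree-`d^m`
homogeneous part of `f^m` is `φ^m`, so `deg f^m = d^m` exactly when `φ^m ≠ 0`; the hypothesis
says `φ^2 ≠ 0`. If the two components of `φ` are linearly independent over `k`, then so are those
of every `φ^m`: a nonzero binary form over an algebraically closed field can only vanish at a
pair `(u, v)` with `u / v ∈ k`. Otherwise `φ = c • H` for some `c ∈ k² \ 0` and a form `H`, and
then `φ^m = c • g_m` with `g_{m+1} = H(c) • g_m^d`; here `H(c) ≠ 0` because `φ^2 ≠ 0`.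
-/

namespace MvPolynomial

variable {σ R : Type*} [CommSemiring R]

theorem homogeneousComponent_mul_of_totalDegree_le {p q : MvPolynomial σ R} {a b : ℕ}
    (hp : p.totalDegree ≤ a) (hq : q.totalDegree ≤ b) :
    homogeneousComponent (a + b) (p * q) =
      homogeneousComponent a p * homogeneousComponent b q := by
  classical
  ext m
  simp only [coeff_homogeneousComponent, coeff_mul, ite_zero_mul_ite_zero, Finset.ite_sum_zero]
  refine Finset.sum_congr rfl fun x hx => ?_
  obtain h1 | h1 := lt_or_ge a x.1.degree
  · simp [coeff_eq_zero_of_totalDegree_lt (hp.trans_lt h1)]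
  obtain h2 | h2 := lt_or_ge b x.2.degree
  · simp [coeff_eq_zero_of_totalDegree_lt (hq.trans_lt h2)]
  have hdeg : x.1.degree + x.2.degree = m.degree := by
    rw [← map_add, Finset.HasAntidiagonal.mem_antidiagonal.mp hx]
  have hab : m.degree = a + b ↔ x.1.degree = a ∧ x.2.degree = b := by omega
  simp only [hab]

theorem homogeneousComponent_finsetProd_of_totalDegree_le {ι : Type*} {s : Finset ι}
    {p : ι → MvPolynomial σ R} {n : ι → ℕ} (hp : ∀ i ∈ s, (p i).totalDegree ≤ n i) :
    homogeneousComponent (∑ i ∈ s, n i) (∏ i ∈ s, p i) =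
      ∏ i ∈ s, homogeneousComponent (n i) (p i) := by
  induction s using Finset.cons_induction with
  | empty => simp [homogeneousComponent_zero]
  | cons i s hi ih =>
    simp only [Finset.prod_cons, Finset.sum_cons, Finset.forall_mem_cons] at hp ⊢
    rw [homogeneousComponent_mul_of_totalDegree_le hp.1
      ((totalDegree_finsetProd _ _).trans (Finset.sum_le_sum hp.2)), ih hp.2]

theorem homogeneousComponent_pow_of_totalDegree_le {p : MvPolynomial σ R} {a : ℕ}
    (hp : p.totalDegree ≤ a) (n : ℕ) :
    homogeneousComponent (n * a) (p ^ n) = homogeneousComponent a p ^ n := by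
  simpa using homogeneousComponent_finsetProd_of_totalDegree_le
    (s := Finset.range n) (n := fun _ => a) (fun _ _ => hp)

theorem homogeneousComponent_totalDegree_ne_zero {p : MvPolynomial σ R} (hp : p ≠ 0) :
    homogeneousComponent p.totalDegree p ≠ 0 := by
  obtain ⟨m, hm, hdeg⟩ := p.support.exists_mem_eq_sup (support_nonempty.mpr hp) fun m => m.degree
  refine ne_of_apply_ne (coeff m) ?_
  have hmdeg : m.degree = p.totalDegree := hdeg.symm
  rw [coeff_homogeneousComponent, if_pos hmdeg, coeff_zero]
  exact mem_support_iff.mp hm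

theorem IsHomogeneous.aeval_mul_const {A : Type*} [CommSemiring A] [Algebra R A]
    {P : MvPolynomial σ R} {n : ℕ} (hP : P.IsHomogeneous n) (u : σ → A) (t : A) :
    MvPolynomial.aeval (fun i => u i * t) P = MvPolynomial.aeval u P * t ^ n := by
  conv_lhs => rw [P.as_sum]
  conv_rhs => rw [P.as_sum]
  rw [map_sum, map_sum, Finset.sum_mul]
  refine Finset.sum_congr rfl fun m hm => ?_
  rw [aeval_monomial, aeval_monomial, hP.degree_eq_sum_deg_support hm,
    ← Finset.prod_pow_eq_pow_sum]
  simp only [mul_pow, Finsupp.prod, Finset.prod_mul_distrib, mul_assoc]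

variable {τ : Type*} {g : σ → MvPolynomial τ R} {e : ℕ}

theorem totalDegree_bind₁_monomial_le (hg : ∀ i, (g i).totalDegree ≤ e) (m : σ →₀ ℕ) (r : R) :
    (bind₁ g (monomial m r)).totalDegree ≤ m.degree * e := by
  rw [bind₁_monomial, Finsupp.degree_apply, Finset.sum_mul]
  refine (totalDegree_mul _ _).trans ?_
  rw [totalDegree_C, zero_add]
  refine (totalDegree_finsetProd _ _).trans (Finset.sum_le_sum fun i _ => ?_)
  exact (totalDegree_pow _ _).trans (Nat.mul_le_mul_left _ (hg i))

theorem homogeneousComponent_bind₁_monomial (hg : ∀ i, (g i).totalDegree ≤ e) (m : σ →₀ ℕ)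
    (r : R) : homogeneousComponent (m.degree * e) (bind₁ g (monomial m r)) =
      bind₁ (fun i => homogeneousComponent e (g i)) (monomial m r) := by
  rw [bind₁_monomial, bind₁_monomial, homogeneousComponent_C_mul, Finsupp.degree_apply,
    Finset.sum_mul, homogeneousComponent_finsetProd_of_totalDegree_le]
  · simp_rw [homogeneousComponent_pow_of_totalDegree_le (hg _)]
  · exact fun i _ => (totalDegree_pow _ _).trans (Nat.mul_le_mul_left _ (hg i))

theorem totalDegree_bind₁_le (hg : ∀ i, (g i).totalDegree ≤ e) (p : MvPolynomial σ R) :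
    (bind₁ g p).totalDegree ≤ p.totalDegree * e := by
  conv_lhs => rw [p.as_sum, map_sum]
  refine totalDegree_finsetSum_le fun m hm => (totalDegree_bind₁_monomial_le hg m _).trans ?_
  exact Nat.mul_le_mul_right _ (le_totalDegree hm)

theorem homogeneousComponent_bind₁ (hg : ∀ i, (g i).totalDegree ≤ e) (he : 0 < e)
    {p : MvPolynomial σ R} {a : ℕ} (hp : p.totalDegree ≤ a) :
    homogeneousComponent (a * e) (bind₁ g p) =
      bind₁ (fun i => homogeneousComponent e (g i)) (homogeneousComponent a p) := by
  classical
  conv_rhs => rw [homogeneousComponent_apply, map_sum, Finset.sum_filter]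
  conv_lhs => rw [p.as_sum, map_sum, map_sum]
  refine Finset.sum_congr rfl fun m hm => ?_
  split_ifs with hma
  · rw [← hma, homogeneousComponent_bind₁_monomial hg]
  · refine homogeneousComponent_eq_zero _ _ ((totalDegree_bind₁_monomial_le hg m _).trans_lt ?_)
    have hm' : m.degree < a := (lt_of_le_of_ne ((le_totalDegree hm).trans hp) hma)
    exact Nat.mul_lt_mul_of_pos_right hm' he

end MvPolynomial

section Endomorphism

variable {R : Type*} [CommSemiring R] {n : ℕ}

theorem totalDegree_le_mvDeg (f : Fin n → MvPolynomial (Fin n) R) (i : Fin n) :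
    (f i).totalDegree ≤ mvDeg f :=
  Finset.le_sup (f := fun j => (f j).totalDegree) (Finset.mem_univ i)

theorem mvComp_X (f : Fin n → MvPolynomial (Fin n) R) : mvComp f X = f :=
  funext fun i => by rw [mvComp, bind₁_X_left, AlgHom.id_apply]

theorem mvDeg_le_iff {f : Fin n → MvPolynomial (Fin n) R} {e : ℕ} :
    mvDeg f ≤ e ↔ ∀ i, (f i).totalDegree ≤ e := by
  simp [mvDeg]

theorem mvDeg_mvComp_le (g f : Fin n → MvPolynomial (Fin n) R) :
    mvDeg (mvComp g f) ≤ mvDeg g * mvDeg f :=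
  mvDeg_le_iff.mpr fun i => (totalDegree_bind₁_le (totalDegree_le_mvDeg f) (g i)).trans
    (Nat.mul_le_mul_right _ (totalDegree_le_mvDeg g i))

theorem mvDeg_iterate_mvComp_le (f : Fin n → MvPolynomial (Fin n) R) (m : ℕ) :
    mvDeg ((mvComp f)^[m] X) ≤ mvDeg f ^ m := by
  induction m with
  | zero => exact mvDeg_le_iff.mpr fun i => (isHomogeneous_X R i).totalDegree_le
  | succ m ih =>
    rw [Function.iterate_succ_apply', pow_succ']
    exact (mvDeg_mvComp_le f _).trans (Nat.mul_le_mul_left _ ih)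

theorem homogeneousComponent_iterate_mvComp (f : Fin n → MvPolynomial (Fin n) R)
    (hf : 0 < mvDeg f) (m : ℕ) :
    (fun i => homogeneousComponent (mvDeg f ^ m) ((mvComp f)^[m] X i)) =
      (mvComp fun i => homogeneousComponent (mvDeg f) (f i))^[m] X := by
  induction m with
  | zero => funext i; simp [homogeneousComponent_eq_self (isHomogeneous_X R i)]
  | succ m ih =>
    rw [Function.iterate_succ_apply', Function.iterate_succ_apply', ← ih]
    funext i
    rw [pow_succ']
    exact homogeneousComponent_bind₁
      (fun j => (totalDegree_le_mvDeg _ j).trans (mvDeg_iterate_mvComp_le f m))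
      (pow_pos hf m) (totalDegree_le_mvDeg f i)

theorem mvDeg_eq_iff_homogeneousComponent_ne_zero {f : Fin n → MvPolynomial (Fin n) R} {e : ℕ}
    (hf : mvDeg f ≤ e) (he : 0 < e) :
    mvDeg f = e ↔ (fun i => homogeneousComponent e (f i)) ≠ 0 := by
  refine ⟨fun hfe h => ?_, fun h => ?_⟩
  · have hlt : ∀ i, (f i).totalDegree < e := fun i => by
      refine lt_of_le_of_ne ((totalDegree_le_mvDeg f i).trans hf) fun hi => ?_
      have hfi : f i ≠ 0 := by rintro h0; rw [h0, totalDegree_zero] at hi; omega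
      exact homogeneousComponent_totalDegree_ne_zero hfi (hi ▸ congrFun h i)
    exact ((Finset.sup_lt_iff he).mpr fun i _ => hlt i).ne hfe
  · obtain ⟨i, hi⟩ := Function.ne_iff.mp h
    refine le_antisymm hf (le_of_not_gt fun hlt => hi ?_)
    exact homogeneousComponent_eq_zero _ _ ((totalDegree_le_mvDeg f i).trans_lt hlt)

end Endomorphism

section Plane

variable {k : Type*} [Field k]

theorem exists_eq_smul_of_not_linearIndependent {M : Type*} [AddCommGroup M] [Module k M]
    {v : Fin 2 → M} (hv : ¬LinearIndependent k v) :
    ∃ c : Fin 2 → k, c ≠ 0 ∧ ∃ g : M, ∀ i, v i = c i • g := by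
  rw [linearIndependent_fin2, not_and_or, not_not, not_forall] at hv
  rcases hv with h1 | ⟨a, ha⟩
  · refine ⟨![1, 0], fun h => one_ne_zero (congrFun h 0), v 0, fun i => ?_⟩
    fin_cases i <;> simp [h1]
  · refine ⟨![a, 1], fun h => one_ne_zero (congrFun h 1), v 1, fun i => ?_⟩
    fin_cases i <;> simp [not_not.mp ha]

theorem mvComp_smul_of_eq_smul {φ : Fin 2 → MvPolynomial (Fin 2) k} {c : Fin 2 → k}
    {H : MvPolynomial (Fin 2) k} {d : ℕ} (hH : H.IsHomogeneous d) (hφ : ∀ i, φ i = c i • H)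
    (g : MvPolynomial (Fin 2) k) :
    mvComp φ (fun i => c i • g) = fun i => c i • (aeval c H • g ^ d) := by
  have hcg : (fun j => c j • g) = fun j => (C ∘ c) j * g := by
    funext j; rw [smul_eq_C_mul, Function.comp_apply]
  funext i
  rw [mvComp, hφ, map_smul, ← aeval_eq_bind₁, hcg, hH.aeval_mul_const, aeval_C_comp_left]
  simp only [smul_eq_C_mul]

theorem iterate_mvComp_ne_zero_of_eq_smul {φ : Fin 2 → MvPolynomial (Fin 2) k} {c : Fin 2 → k}
    {H : MvPolynomial (Fin 2) k} {d : ℕ} (hH : H.IsHomogeneous d) (hφ : ∀ i, φ i = c i • H)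
    (hc : c ≠ 0) (hd : 0 < d) (h2 : (mvComp φ)^[2] X ≠ 0) {m : ℕ} (hm : 1 ≤ m) :
    (mvComp φ)^[m] X ≠ 0 := by
  have h1 : (mvComp φ)^[1] X = fun i => c i • H := by
    rw [Function.iterate_one, mvComp_X]
    exact funext hφ
  have hg₂ : aeval c H • H ^ d ≠ 0 := by
    intro h
    apply h2
    rw [Function.iterate_succ_apply', h1, mvComp_smul_of_eq_smul hH hφ, h]
    exact funext fun i => smul_zero _
  rw [smul_ne_zero_iff, pow_ne_zero_iff hd.ne'] at hg₂
  obtain ⟨g, hg, hgm⟩ : ∃ g ≠ 0, (mvComp φ)^[m] X = fun i => c i • g := by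
    induction m, hm using Nat.le_induction with
    | base => exact ⟨H, hg₂.2, h1⟩
    | succ m _ ih =>
      obtain ⟨g, hg, hgm⟩ := ih
      refine ⟨aeval c H • g ^ d, smul_ne_zero hg₂.1 (pow_ne_zero _ hg), ?_⟩
      rw [Function.iterate_succ_apply', hgm, mvComp_smul_of_eq_smul hH hφ]
  obtain ⟨i, hi⟩ := Function.ne_iff.mp hc
  rw [hgm]
  exact fun h => smul_ne_zero hi hg (congrFun h i)

variable [IsAlgClosed k]

theorem not_linearIndependent_of_aeval_eq_zero_of_field {K : Type*} [Field K] [Algebra k K]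
    {w : MvPolynomial (Fin 2) k} {d : ℕ} (hw : w.IsHomogeneous d) (hw0 : w ≠ 0)
    {v : Fin 2 → K} (hv : aeval v w = 0) : ¬LinearIndependent k v := by
  rw [linearIndependent_fin2, not_and_or, not_not, not_forall]
  refine or_iff_not_imp_left.mpr fun hv1 => ?_
  set W : Polynomial k := aeval ![Polynomial.X, 1] w
  have hwW : W.homogenize d = w := Polynomial.homogenize_eq_of_isHomogeneous hw rfl
  have hW0 : W ≠ 0 := fun h => hw0 (by rw [← hwW, h, Polynomial.homogenize_zero])
  have hroot : Polynomial.aeval (v 0 / v 1) W = 0 := by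
    have hv' : v = fun i => ![v 0 / v 1, 1] i * v 1 := by
      funext i; fin_cases i <;> simp [hv1]
    rw [hv', hw.aeval_mul_const, mul_eq_zero, or_iff_left (pow_ne_zero _ hv1)] at hv
    have hξ : (fun i => Polynomial.aeval (v 0 / v 1) (![Polynomial.X, 1] i : Polynomial k)) =
        ![v 0 / v 1, 1] := by
      funext i; fin_cases i <;> simp
    rw [comp_aeval_apply, hξ, hv]
  obtain ⟨r, hr⟩ := minpoly.degree_eq_one_iff.mp (IsAlgClosed.degree_eq_one_of_irreducible k
    (minpoly.irreducible (IsAlgebraic.isIntegral ⟨W, hW0, hroot⟩)))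
  exact ⟨r, not_not.mpr (by rw [Algebra.smul_def, hr, div_mul_cancel₀ _ hv1])⟩

theorem not_linearIndependent_of_aeval_eq_zero {A : Type*} [CommRing A] [IsDomain A]
    [Algebra k A] {w : MvPolynomial (Fin 2) k} {d : ℕ} (hw : w.IsHomogeneous d) (hw0 : w ≠ 0)
    {v : Fin 2 → A} (hv : aeval v w = 0) : ¬LinearIndependent k v := fun hli =>
  not_linearIndependent_of_aeval_eq_zero_of_field hw hw0
    (v := algebraMap A (FractionRing A) ∘ v) (by rw [aeval_algebraMap_apply, hv, map_zero])
    (hli.map' (IsScalarTower.toAlgHom k A (FractionRing A)).toLinearMap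
      (LinearMap.ker_eq_bot.mpr (IsFractionRing.injective A (FractionRing A))))

theorem linearIndependent_aeval_of_isHomogeneous {A : Type*} [CommRing A] [IsDomain A]
    [Algebra k A]
    {φ : Fin 2 → MvPolynomial (Fin 2) k} {d : ℕ} (hφ : ∀ i, (φ i).IsHomogeneous d)
    (hφli : LinearIndependent k φ) {v : Fin 2 → A} (hv : LinearIndependent k v) :
    LinearIndependent k fun i => aeval v (φ i) := by
  by_contra h
  obtain ⟨c, hc, g, hcg⟩ := exists_eq_smul_of_not_linearIndependent h
  refine not_linearIndependent_of_aeval_eq_zero (w := c 1 • φ 0 - c 0 • φ 1) (d := d) ?_ ?_ ?_ hv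
  · rw [smul_eq_C_mul, smul_eq_C_mul]
    exact ((hφ 0).C_mul _).sub ((hφ 1).C_mul _)
  · intro h0
    have hc0 := Fintype.linearIndependent_iff.mp hφli ![c 1, -c 0]
      (by simpa [Fin.sum_univ_two, sub_eq_add_neg] using h0)
    refine hc (funext fun i => ?_)
    fin_cases i
    · simpa using hc0 1
    · simpa using hc0 0
  · rw [map_sub, map_smul, map_smul, hcg, hcg, smul_smul, smul_smul, mul_comm, sub_self]

theorem linearIndependent_iterate_mvComp {φ : Fin 2 → MvPolynomial (Fin 2) k} {d : ℕ}
    (hφ : ∀ i, (φ i).IsHomogeneous d) (hφli : LinearIndependent k φ) (m : ℕ) :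
    LinearIndependent k ((mvComp φ)^[m] X) := by
  induction m with
  | zero => exact linearIndependent_X _ _
  | succ m ih =>
    rw [Function.iterate_succ_apply']
    exact linearIndependent_aeval_of_isHomogeneous hφ hφli ih

theorem iterate_mvComp_ne_zero {φ : Fin 2 → MvPolynomial (Fin 2) k} {d : ℕ}
    (hφ : ∀ i, (φ i).IsHomogeneous d) (hd : 0 < d) (h2 : (mvComp φ)^[2] X ≠ 0) {m : ℕ}
    (hm : 1 ≤ m) : (mvComp φ)^[m] X ≠ 0 := by
  by_cases hli : LinearIndependent k φ
  · exact fun h => (linearIndependent_iterate_mvComp hφ hli m).ne_zero 0 (congrFun h 0)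
  · obtain ⟨c, hc, H, hφH⟩ := exists_eq_smul_of_not_linearIndependent hli
    obtain ⟨i, hi⟩ := Function.ne_iff.mp hc
    have hH : H.IsHomogeneous d := by
      have := hφ i
      rwa [hφH i, ← mem_homogeneousSubmodule, Submodule.smul_mem_iff _ hi] at this
    exact iterate_mvComp_ne_zero_of_eq_smul hH hφH hc hd h2 hm

end Plane

theorem stmt_9_general (k : Type*) [Field k] [IsAlgClosed k]
    (f : Fin 2 → MvPolynomial (Fin 2) k)
    (hdf : 2 ≤ mvDeg f)
    (h2 : mvDeg (mvComp f f) = (mvDeg f) ^ 2) :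
    ∀ m : ℕ, 1 ≤ m →
      mvDeg ((mvComp f)^[m] (fun i => MvPolynomial.X i)) = (mvDeg f) ^ m := by
  intro m hm
  have hd : 0 < mvDeg f := by omega
  have hf2 : (mvComp f)^[2] X = mvComp f f := by
    rw [Function.iterate_succ_apply', Function.iterate_one, mvComp_X]
  rw [mvDeg_eq_iff_homogeneousComponent_ne_zero (mvDeg_iterate_mvComp_le f m) (pow_pos hd m),
    homogeneousComponent_iterate_mvComp f hd]
  refine iterate_mvComp_ne_zero (fun i => homogeneousComponent_isHomogeneous _ _) hd ?_ hm
  rw [← homogeneousComponent_iterate_mvComp f hd, ← mvDeg_eq_iff_homogeneousComponent_ne_zero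
    (mvDeg_iterate_mvComp_le f 2) (pow_pos hd 2), hf2, h2]

theorem stmt_9 (k : Type*) [Field k] [IsAlgClosed k]
    (f finv : Fin 2 → MvPolynomial (Fin 2) k)
    (hf1 : ∀ i, MvPolynomial.bind₁ f (finv i) = MvPolynomial.X i)
    (hf2 : ∀ i, MvPolynomial.bind₁ finv (f i) = MvPolynomial.X i)
    (hdf : 2 ≤ mvDeg f)
    (h2 : mvDeg (mvComp f f) = (mvDeg f) ^ 2) :
    ∀ m : ℕ, 1 ≤ m →
      mvDeg ((mvComp f)^[m] (fun i => MvPolynomial.X i)) = (mvDeg f) ^ m :=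
  stmt_9_general k f hdf h2
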